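/- Let U ⊆ ℝ³ be open, let f, g, h, P, Q, T : U → ℝ be continuously differentiable with T nonvanishing on U, and let I : U → ℝ be twice continuously differentiable with ∂I/∂x = −(Q·T)·g − (P·T)·h, ∂I/∂y = (Q·T)·f and ∂I/∂z = (P·T)·f on U. Then, writing D[F] = f·∂F/∂x + g·∂F/∂y + h·∂F/∂z, the identity f·P·D[T]/T = −f·D[P] − P·(f·∂f/∂x + g·∂f/∂y + f·∂h/∂z) − Q·(f·∂g/∂z − g·∂f/∂z) holds on U. -/

import Mathlib

/-!
The identity is the compatibility of the mixed second partials of the first integral `I`.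
Substituting the given gradient of `I` into `∂_z ∂_x I = ∂_x ∂_z I` and `∂_z ∂_y I = ∂_y ∂_z I`
and expanding by the product rule gives two relations linear in the first derivatives of
`P`, `Q`, `T`; their combination with weights `-f` and `-g` is `T` times the claimed identity.
-/

/-- Partial derivative in the `x` direction of a function on `ℝ³`. -/
noncomputable def pdX (F : ℝ × ℝ × ℝ → ℝ) (p : ℝ × ℝ × ℝ) : ℝ :=
  fderiv ℝ F p (1, 0, 0)

/-- Partial derivative in the `y` direction. -/
noncomputable def pdY (F : ℝ × ℝ × ℝ → ℝ) (p : ℝ × ℝ × ℝ) : ℝ :=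
  fderiv ℝ F p (0, 1, 0)

/-- Partial derivative in the `z` direction. -/
noncomputable def pdZ (F : ℝ × ℝ × ℝ → ℝ) (p : ℝ × ℝ × ℝ) : ℝ :=
  fderiv ℝ F p (0, 0, 1)

/-- The Darboux operator `D = f·∂ₓ + g·∂ᵧ + h·∂_z` applied to `F`. -/
noncomputable def Dop (f g h F : ℝ × ℝ × ℝ → ℝ) (p : ℝ × ℝ × ℝ) : ℝ :=
  f p * pdX F p + g p * pdY F p + h p * pdZ F p

open Filter Topology

section MixedPartials

variable {E F : Type*} [NormedAddCommGroup E] [NormedSpace ℝ E]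
  [NormedAddCommGroup F] [NormedSpace ℝ F]

theorem ContDiffAt.fderiv_fderiv_apply_comm {I : E → F} {p : E} (hI : ContDiffAt ℝ 2 I p)
    (v w : E) :
    fderiv ℝ (fun q => fderiv ℝ I q v) p w = fderiv ℝ (fun q => fderiv ℝ I q w) p v := by
  have hd : DifferentiableAt ℝ (fderiv ℝ I) p :=
    (hI.fderiv_right le_rfl).differentiableAt one_ne_zero
  rw [fderiv_clm_apply hd (differentiableAt_const v),
    fderiv_clm_apply hd (differentiableAt_const w)]
  simpa using hI.isSymmSndFDerivAt (by simp) w v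

theorem ContDiffAt.fderiv_apply_comm_of_eventuallyEq {I : E → F} {A B : E → F} {p v w : E}
    (hI : ContDiffAt ℝ 2 I p) (hA : (fun q => fderiv ℝ I q v) =ᶠ[𝓝 p] A)
    (hB : (fun q => fderiv ℝ I q w) =ᶠ[𝓝 p] B) :
    fderiv ℝ A p w = fderiv ℝ B p v := by
  rw [← hA.fderiv_eq, ← hB.fderiv_eq]
  exact hI.fderiv_fderiv_apply_comm v w

end MixedPartials

theorem compatibility_identity_P
    (U : Set (ℝ × ℝ × ℝ)) (hU : IsOpen U)
    (f g h P Q T I : ℝ × ℝ × ℝ → ℝ)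
    (hf : ContDiffOn ℝ 1 f U) (hg : ContDiffOn ℝ 1 g U) (hh : ContDiffOn ℝ 1 h U)
    (hP : ContDiffOn ℝ 1 P U) (hQ : ContDiffOn ℝ 1 Q U) (hT : ContDiffOn ℝ 1 T U)
    (hTne : ∀ p ∈ U, T p ≠ 0)
    (hI : ContDiffOn ℝ 2 I U)
    (hIx : ∀ p ∈ U, pdX I p = -(Q p * T p) * g p - (P p * T p) * h p)
    (hIy : ∀ p ∈ U, pdY I p = (Q p * T p) * f p)
    (hIz : ∀ p ∈ U, pdZ I p = (P p * T p) * f p) :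
    ∀ p ∈ U,
      f p * P p * Dop f g h T p / T p =
        -(f p * Dop f g h P p)
          - P p * (f p * pdX f p + g p * pdY f p + f p * pdZ h p)
          - Q p * (f p * pdZ g p - g p * pdZ f p) := by
  intro p hp
  have hUp : U ∈ 𝓝 p := hU.mem_nhds hp
  have hI₂ : ContDiffAt ℝ 2 I p := hI.contDiffAt hUp
  have hxz := hI₂.fderiv_apply_comm_of_eventuallyEq
    (eventually_of_mem hUp hIx) (eventually_of_mem hUp hIz)
  have hyz := hI₂.fderiv_apply_comm_of_eventuallyEq
    (eventually_of_mem hUp hIy) (eventually_of_mem hUp hIz)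
  have diff {F : ℝ × ℝ × ℝ → ℝ} (hF : ContDiffOn ℝ 1 F U) : DifferentiableAt ℝ F p :=
    (hF.differentiableOn one_ne_zero).differentiableAt hUp
  have := diff hf; have := diff hg; have := diff hh
  have := diff hP; have := diff hQ; have := diff hT
  -- `hxz : ∂_z ∂_x I = ∂_x ∂_z I` and `hyz : ∂_z ∂_y I = ∂_y ∂_z I`, expanded by the product rule
  simp (disch := fun_prop) only [fderiv_fun_sub, fderiv_fun_mul, fderiv_fun_neg,
    add_apply, sub_apply, neg_apply, smul_apply, smul_eq_mul] at hxz hyz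
  rw [div_eq_iff (hTne p hp)]
  simp only [Dop, pdX, pdY, pdZ]
  linear_combination (-f p) * hxz + (-g p) * hyz
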